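/- arXiv:math/0206229 — 6 statements merged into one kernel-verified Lean document; each statement's English description precedes it below -/
import Mathlib

section
/- For every real number y, the basic solution F(ρ,η) = √(ρ² + (η−y)²)/√ρ is an eigenfunction of the hyperbolic Laplacian with eigenvalue 3/4: at every point (ρ,η) of the upper half-plane H, ρ²(∂²F/∂ρ² + ∂²F/∂η²)(ρ,η) = (3/4)·F(ρ,η). -/
/-- Partial derivative in the first variable (ρ). -/
noncomputable def pdr (f : ℝ → ℝ → ℝ) (ρ η : ℝ) : ℝ := deriv (fun r => f r η) ρ

/-- Partial derivative in the second variable (η). -/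
noncomputable def pde (f : ℝ → ℝ → ℝ) (ρ η : ℝ) : ℝ := deriv (fun e => f ρ e) η

/-- The basic eigenfunction F(ρ,η;y) = √(ρ² + (η−y)²)/√ρ. -/
noncomputable def Fbasic (y : ℝ) (ρ η : ℝ) : ℝ :=
  Real.sqrt (ρ ^ 2 + (η - y) ^ 2) / Real.sqrt ρ

/-! Translation in `η` commutes with both partial derivatives, so it suffices to treat `y = 0`.
There, with `B = √(ρ² + η²)`, a direct computation gives
`∂²F/∂ρ² = (3η⁴ + 6ρ²η² - ρ⁴) / (4 ρ² √ρ B³)` and `∂²F/∂η² = ρ² / (√ρ B³)`,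
whose sum is `3 B⁴ / (4 ρ² √ρ B³) = 3 F / (4 ρ²)`. -/

open Real Topology

lemma hasDerivAt_sqrt_add_sq {a x : ℝ} (hx : a + x ^ 2 ≠ 0) :
    HasDerivAt (fun t => √(a + t ^ 2)) (x / √(a + x ^ 2)) x := by
  refine (((hasDerivAt_pow 2 x).const_add a).sqrt hx).congr_deriv ?_
  rw [Nat.cast_ofNat, pow_one, mul_div_mul_left _ _ two_ne_zero]

lemma hasDerivAt_sqrt_sq_add {a x : ℝ} (hx : x ^ 2 + a ≠ 0) :
    HasDerivAt (fun t => √(t ^ 2 + a)) (x / √(x ^ 2 + a)) x := by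
  simpa only [add_comm a] using hasDerivAt_sqrt_add_sq (a := a) (add_comm a _ ▸ hx)

lemma pdr_comp_sub (f : ℝ → ℝ → ℝ) (y : ℝ) :
    pdr (fun ρ η => f ρ (η - y)) = fun ρ η => pdr f ρ (η - y) := rfl

lemma pde_comp_sub (f : ℝ → ℝ → ℝ) (y : ℝ) :
    pde (fun ρ η => f ρ (η - y)) = fun ρ η => pde f ρ (η - y) :=
  funext₂ fun _ _ => deriv_comp_sub_const ..

lemma Fbasic_eq_comp_sub (y : ℝ) : Fbasic y = fun ρ η => Fbasic 0 ρ (η - y) := by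
  funext ρ η
  simp only [Fbasic, sub_zero]

lemma Fbasic_zero : Fbasic 0 = fun ρ η => √(ρ ^ 2 + η ^ 2) / √ρ := by
  funext ρ η
  simp only [Fbasic, sub_zero]

section
variable {ρ η : ℝ}

lemma hasDerivAt_Fbasic_zero_fst (hρ : 0 < ρ) :
    HasDerivAt (fun r => Fbasic 0 r η) ((ρ ^ 2 - η ^ 2) / (2 * ρ * √ρ * √(ρ ^ 2 + η ^ 2))) ρ := by
  have hB := hasDerivAt_sqrt_sq_add (a := η ^ 2) (x := ρ) (by positivity)
  rw [Fbasic_zero]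
  refine (hB.fun_div (hasDerivAt_sqrt hρ.ne') (by positivity)).congr_deriv ?_
  field_simp
  rw [sq_sqrt hρ.le, sq_sqrt (by positivity)]
  ring

lemma hasDerivAt_Fbasic_zero_snd (hρ : 0 < ρ) :
    HasDerivAt (fun e => Fbasic 0 ρ e) (η / (√ρ * √(ρ ^ 2 + η ^ 2))) η := by
  have hB := hasDerivAt_sqrt_add_sq (a := ρ ^ 2) (x := η) (by positivity)
  rw [Fbasic_zero]
  refine (hB.div_const √ρ).congr_deriv ?_
  rw [div_div, mul_comm]

lemma pdr_pdr_Fbasic_zero (hρ : 0 < ρ) :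
    pdr (pdr (Fbasic 0)) ρ η
      = (3 * η ^ 4 + 6 * ρ ^ 2 * η ^ 2 - ρ ^ 4) / (4 * ρ ^ 2 * √ρ * √(ρ ^ 2 + η ^ 2) ^ 3) := by
  have hpdr : (fun r => pdr (Fbasic 0) r η) =ᶠ[𝓝 ρ]
      fun r => (r ^ 2 - η ^ 2) / (2 * r * √r * √(r ^ 2 + η ^ 2)) := by
    filter_upwards [eventually_gt_nhds hρ] with r hr
    exact (hasDerivAt_Fbasic_zero_fst hr).deriv
  have hB := hasDerivAt_sqrt_sq_add (a := η ^ 2) (x := ρ) (by positivity)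
  have hG := ((hasDerivAt_pow 2 ρ).sub_const (η ^ 2)).fun_div
    ((((hasDerivAt_id' ρ).const_mul 2).fun_mul (hasDerivAt_sqrt hρ.ne')).fun_mul hB)
    (by positivity)
  rw [pdr, hpdr.deriv_eq, hG.deriv]
  field_simp
  rw [sq_sqrt hρ.le, sq_sqrt (by positivity)]
  ring

lemma pde_pde_Fbasic_zero (hρ : 0 < ρ) :
    pde (pde (Fbasic 0)) ρ η = ρ ^ 2 / (√ρ * √(ρ ^ 2 + η ^ 2) ^ 3) := by
  have hpde : pde (Fbasic 0) ρ = fun e => e / (√ρ * √(ρ ^ 2 + e ^ 2)) :=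
    funext fun e => (hasDerivAt_Fbasic_zero_snd hρ).deriv
  have hG := (hasDerivAt_id' η).fun_div
    ((hasDerivAt_sqrt_add_sq (a := ρ ^ 2) (by positivity)).const_mul √ρ)
    (by positivity)
  rw [pde, hpde, hG.deriv]
  field_simp
  rw [sq_sqrt (by positivity)]
  ring

lemma laplace_Fbasic_zero (hρ : 0 < ρ) :
    ρ ^ 2 * (pdr (pdr (Fbasic 0)) ρ η + pde (pde (Fbasic 0)) ρ η) = 3 / 4 * Fbasic 0 ρ η := by
  rw [pdr_pdr_Fbasic_zero hρ, pde_pde_Fbasic_zero hρ, Fbasic_zero]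
  have hB : √(ρ ^ 2 + η ^ 2) ^ 2 = ρ ^ 2 + η ^ 2 := sq_sqrt (by positivity)
  field_simp
  linear_combination (-3 * (√(ρ ^ 2 + η ^ 2) ^ 2 + ρ ^ 2 + η ^ 2)) * hB

end

/-- The basic solution is an eigenfunction of the hyperbolic Laplacian with
eigenvalue 3/4 on the upper half-plane. -/
theorem basic_solution_eigenfunction (y : ℝ) :
    ∀ ρ η : ℝ, 0 < ρ →
      ρ ^ 2 * (pdr (pdr (Fbasic y)) ρ η + pde (pde (Fbasic y)) ρ η)
        = (3 / 4) * Fbasic y ρ η := by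
  intro ρ η hρ
  rw [Fbasic_eq_comp_sub, pdr_comp_sub, pdr_comp_sub, pde_comp_sub, pde_comp_sub]
  exact laplace_Fbasic_zero hρ
end

section
/- Let F be a smooth real-valued function on the upper half-plane H satisfying ρ²(∂²F/∂ρ² + ∂²F/∂η²) = (3/4)F, and set f(ρ,η) = √ρ·F(ρ,η). Define the ℝ²-valued functions v₁ = (f_ρ, η f_ρ − ρ f_η) and v₂ = (f_η, ρ f_ρ + η f_η − f), where subscripts denote partial derivatives. Then each of the two component pairs satisfies the Joyce equation: ρ(∂v₁/∂ρ + ∂v₂/∂η) = v₁ and ∂v₁/∂η = ∂v₂/∂ρ hold componentwise on H. -/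
open Filter Topology

/-- f = √ρ · F. -/
noncomputable def fpot (F : ℝ → ℝ → ℝ) (ρ η : ℝ) : ℝ := Real.sqrt ρ * F ρ η

/-- First component of v₁ = (f_ρ, η f_ρ − ρ f_η). -/
noncomputable def v11 (F : ℝ → ℝ → ℝ) (ρ η : ℝ) : ℝ := pdr (fpot F) ρ η

/-- Second component of v₁. -/
noncomputable def v12 (F : ℝ → ℝ → ℝ) (ρ η : ℝ) : ℝ :=
  η * pdr (fpot F) ρ η - ρ * pde (fpot F) ρ η

/-- First component of v₂ = (f_η, ρ f_ρ + η f_η − f). -/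
noncomputable def v21 (F : ℝ → ℝ → ℝ) (ρ η : ℝ) : ℝ := pde (fpot F) ρ η

/-- Second component of v₂. -/
noncomputable def v22 (F : ℝ → ℝ → ℝ) (ρ η : ℝ) : ℝ :=
  ρ * pdr (fpot F) ρ η + η * pde (fpot F) ρ η - fpot F ρ η

def Uhp : Set (ℝ × ℝ) := {p | 0 < p.1}

lemma hUopen : IsOpen Uhp := isOpen_lt continuous_const continuous_fst

lemma hUmem {ρ η : ℝ} (h : 0 < ρ) : Uhp ∈ 𝓝 ((ρ, η) : ℝ × ℝ) :=
  hUopen.mem_nhds h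

lemma one_le_inf : (1 : WithTop ℕ∞) ≤ ((⊤ : ℕ∞) : WithTop ℕ∞) := by
  exact_mod_cast (le_top : (1 : ℕ∞) ≤ ⊤)

lemma two_le_inf : (2 : WithTop ℕ∞) ≤ ((⊤ : ℕ∞) : WithTop ℕ∞) := by
  rw [show ((2 : WithTop ℕ∞)) = ((2 : ℕ∞) : WithTop ℕ∞) from rfl]
  exact_mod_cast (le_top : (2 : ℕ∞) ≤ ⊤)

section helpers

variable (H : ℝ → ℝ → ℝ)

lemma hasDerivAt_r {ρ η : ℝ} (hd : DifferentiableAt ℝ (fun p : ℝ × ℝ => H p.1 p.2) (ρ, η)) :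
    HasDerivAt (fun r => H r η) (fderiv ℝ (fun p : ℝ × ℝ => H p.1 p.2) (ρ, η) (1, 0)) ρ := by
  have h1 : HasDerivAt (fun r : ℝ => ((r, η) : ℝ × ℝ)) (1, 0) ρ :=
    (hasDerivAt_id ρ).prodMk (hasDerivAt_const ρ η)
  exact hd.hasFDerivAt.comp_hasDerivAt ρ h1

lemma hasDerivAt_e {ρ η : ℝ} (hd : DifferentiableAt ℝ (fun p : ℝ × ℝ => H p.1 p.2) (ρ, η)) :
    HasDerivAt (fun e => H ρ e) (fderiv ℝ (fun p : ℝ × ℝ => H p.1 p.2) (ρ, η) (0, 1)) η := by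
  have h1 : HasDerivAt (fun e : ℝ => ((ρ, e) : ℝ × ℝ)) (0, 1) η :=
    (hasDerivAt_const η ρ).prodMk (hasDerivAt_id η)
  exact hd.hasFDerivAt.comp_hasDerivAt η h1

lemma pdr_eq {ρ η : ℝ} (hd : DifferentiableAt ℝ (fun p : ℝ × ℝ => H p.1 p.2) (ρ, η)) :
    pdr H ρ η = fderiv ℝ (fun p : ℝ × ℝ => H p.1 p.2) (ρ, η) (1, 0) :=
  (hasDerivAt_r H hd).deriv

lemma pde_eq {ρ η : ℝ} (hd : DifferentiableAt ℝ (fun p : ℝ × ℝ => H p.1 p.2) (ρ, η)) :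
    pde H ρ η = fderiv ℝ (fun p : ℝ × ℝ => H p.1 p.2) (ρ, η) (0, 1) :=
  (hasDerivAt_e H hd).deriv

variable (hH : ContDiffOn ℝ (⊤ : ℕ∞) (fun p : ℝ × ℝ => H p.1 p.2) Uhp)

include hH

lemma diffAt {ρ η : ℝ} (h : 0 < ρ) :
    DifferentiableAt ℝ (fun p : ℝ × ℝ => H p.1 p.2) (ρ, η) :=
  ((hH.contDiffAt (hUmem h)).differentiableAt (by simp))

lemma contDiffOn_fderivH :
    ContDiffOn ℝ (⊤ : ℕ∞) (fderiv ℝ (fun p : ℝ × ℝ => H p.1 p.2)) Uhp :=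
  ((contDiffOn_infty_iff_fderiv_of_isOpen hUopen).mp hH).2

lemma contDiffOn_pdr :
    ContDiffOn ℝ (⊤ : ℕ∞) (fun p : ℝ × ℝ => pdr H p.1 p.2) Uhp := by
  apply ContDiffOn.congr ((contDiffOn_fderivH H hH).clm_apply contDiffOn_const)
  intro p hp
  exact pdr_eq H (diffAt H hH hp)

lemma contDiffOn_pde :
    ContDiffOn ℝ (⊤ : ℕ∞) (fun p : ℝ × ℝ => pde H p.1 p.2) Uhp := by
  apply ContDiffOn.congr ((contDiffOn_fderivH H hH).clm_apply contDiffOn_const)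
  intro p hp
  exact pde_eq H (diffAt H hH hp)

lemma hasDerivAt_pdr {ρ η : ℝ} (h : 0 < ρ) :
    HasDerivAt (fun r => H r η) (pdr H ρ η) ρ := by
  rw [pdr_eq H (diffAt H hH h)]
  exact hasDerivAt_r H (diffAt H hH h)

lemma hasDerivAt_pde {ρ η : ℝ} (h : 0 < ρ) :
    HasDerivAt (fun e => H ρ e) (pde H ρ η) η := by
  rw [pde_eq H (diffAt H hH h)]
  exact hasDerivAt_e H (diffAt H hH h)

lemma fderiv_pdr_eq {ρ η : ℝ} (h : 0 < ρ) (v : ℝ × ℝ) :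
    fderiv ℝ (fun p : ℝ × ℝ => pdr H p.1 p.2) (ρ, η) v =
      fderiv ℝ (fderiv ℝ (fun p : ℝ × ℝ => H p.1 p.2)) (ρ, η) v (1, 0) := by
  have heq : (fun p : ℝ × ℝ => pdr H p.1 p.2) =ᶠ[𝓝 ((ρ, η) : ℝ × ℝ)]
      (fun p => fderiv ℝ (fun p : ℝ × ℝ => H p.1 p.2) p (1, 0)) := by
    filter_upwards [hUmem h] with p hp
    exact pdr_eq H (diffAt H hH hp)
  rw [heq.fderiv_eq]
  have hd : DifferentiableAt ℝ (fderiv ℝ (fun p : ℝ × ℝ => H p.1 p.2)) (ρ, η) :=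
    (((contDiffOn_fderivH H hH).contDiffAt (hUmem h)).differentiableAt (by simp))
  rw [fderiv_clm_apply hd (differentiableAt_const _)]
  simp

lemma fderiv_pde_eq {ρ η : ℝ} (h : 0 < ρ) (v : ℝ × ℝ) :
    fderiv ℝ (fun p : ℝ × ℝ => pde H p.1 p.2) (ρ, η) v =
      fderiv ℝ (fderiv ℝ (fun p : ℝ × ℝ => H p.1 p.2)) (ρ, η) v (0, 1) := by
  have heq : (fun p : ℝ × ℝ => pde H p.1 p.2) =ᶠ[𝓝 ((ρ, η) : ℝ × ℝ)]
      (fun p => fderiv ℝ (fun p : ℝ × ℝ => H p.1 p.2) p (0, 1)) := by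
    filter_upwards [hUmem h] with p hp
    exact pde_eq H (diffAt H hH hp)
  rw [heq.fderiv_eq]
  have hd : DifferentiableAt ℝ (fderiv ℝ (fun p : ℝ × ℝ => H p.1 p.2)) (ρ, η) :=
    (((contDiffOn_fderivH H hH).contDiffAt (hUmem h)).differentiableAt (by simp))
  rw [fderiv_clm_apply hd (differentiableAt_const _)]
  simp

lemma clairaut {ρ η : ℝ} (h : 0 < ρ) :
    pde (pdr H) ρ η = pdr (pde H) ρ η := by
  have hsym : IsSymmSndFDerivAt ℝ (fun p : ℝ × ℝ => H p.1 p.2) (ρ, η) :=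
    (hH.contDiffAt (hUmem h)).isSymmSndFDerivAt (by rw [minSmoothness_of_isRCLikeNormedField]; exact two_le_inf)
  have h1 : pde (pdr H) ρ η
      = fderiv ℝ (fun p : ℝ × ℝ => pdr H p.1 p.2) (ρ, η) (0, 1) :=
    pde_eq _ ((((contDiffOn_pdr H hH).contDiffAt (hUmem h)).differentiableAt (by simp)))
  have h2 : pdr (pde H) ρ η
      = fderiv ℝ (fun p : ℝ × ℝ => pde H p.1 p.2) (ρ, η) (1, 0) :=
    pdr_eq _ ((((contDiffOn_pde H hH).contDiffAt (hUmem h)).differentiableAt (by simp)))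
  rw [h1, h2, fderiv_pdr_eq H hH h, fderiv_pde_eq H hH h]
  exact hsym _ _

end helpers

section fpot

variable (F : ℝ → ℝ → ℝ)
variable (hF : ContDiffOn ℝ (⊤ : ℕ∞) (fun p : ℝ × ℝ => F p.1 p.2) Uhp)

include hF

lemma contDiffOn_fpot :
    ContDiffOn ℝ (⊤ : ℕ∞) (fun p : ℝ × ℝ => fpot F p.1 p.2) Uhp := by
  intro p hp
  have hp1 : (0 : ℝ) < p.1 := hp
  have hsq : ContDiffAt ℝ (⊤ : ℕ∞) (fun p : ℝ × ℝ => Real.sqrt p.1) p :=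
    (Real.contDiffAt_sqrt hp1.ne').comp p contDiff_fst.contDiffAt
  exact (hsq.mul (hF.contDiffAt (hUopen.mem_nhds hp))).contDiffWithinAt

lemma pdr_fpot {ρ η : ℝ} (h : 0 < ρ) :
    pdr (fpot F) ρ η = 1 / (2 * Real.sqrt ρ) * F ρ η + Real.sqrt ρ * pdr F ρ η := by
  have h1 : HasDerivAt Real.sqrt (1 / (2 * Real.sqrt ρ)) ρ := Real.hasDerivAt_sqrt h.ne'
  have h2 : HasDerivAt (fun r => F r η) (pdr F ρ η) ρ := hasDerivAt_pdr F hF h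
  exact (h1.mul h2).deriv

lemma pde_fpot {ρ η : ℝ} (h : 0 < ρ) :
    pde (fpot F) ρ η = Real.sqrt ρ * pde F ρ η := by
  have h2 : HasDerivAt (fun e => F ρ e) (pde F ρ η) η := hasDerivAt_pde F hF h
  exact (h2.const_mul (Real.sqrt ρ)).deriv

lemma pde_pde_fpot {ρ η : ℝ} (h : 0 < ρ) :
    pde (pde (fpot F)) ρ η = Real.sqrt ρ * pde (pde F) ρ η := by
  have hfun : (fun e => pde (fpot F) ρ e) = fun e => Real.sqrt ρ * pde F ρ e :=
    funext fun e => pde_fpot F hF h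
  have h2 : HasDerivAt (fun e => pde F ρ e) (pde (pde F) ρ η) η :=
    hasDerivAt_pde (pde F) (contDiffOn_pde F hF) h
  show deriv (fun e => pde (fpot F) ρ e) η = _
  rw [hfun]
  exact (h2.const_mul (Real.sqrt ρ)).deriv

lemma pdr_pdr_fpot {ρ η : ℝ} (h : 0 < ρ) :
    pdr (pdr (fpot F)) ρ η =
      ((0 * (2 * Real.sqrt ρ) - 1 * (2 * (1 / (2 * Real.sqrt ρ)))) / (2 * Real.sqrt ρ) ^ 2)
          * F ρ η + 1 / (2 * Real.sqrt ρ) * pdr F ρ η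
        + (1 / (2 * Real.sqrt ρ) * pdr F ρ η + Real.sqrt ρ * pdr (pdr F) ρ η) := by
  have hs : Real.sqrt ρ > 0 := Real.sqrt_pos.2 h
  have heq : (fun r => pdr (fpot F) r η) =ᶠ[𝓝 ρ]
      (fun r => 1 / (2 * Real.sqrt r) * F r η + Real.sqrt r * pdr F r η) := by
    filter_upwards [eventually_gt_nhds h] with r hr
    exact pdr_fpot F hF hr
  show deriv (fun r => pdr (fpot F) r η) ρ = _
  rw [heq.deriv_eq]
  have hden : HasDerivAt (fun r => 2 * Real.sqrt r) (2 * (1 / (2 * Real.sqrt ρ))) ρ :=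
    (Real.hasDerivAt_sqrt h.ne').const_mul 2
  have ht1 : HasDerivAt (fun r => 1 / (2 * Real.sqrt r))
      ((0 * (2 * Real.sqrt ρ) - 1 * (2 * (1 / (2 * Real.sqrt ρ)))) / (2 * Real.sqrt ρ) ^ 2) ρ :=
    (hasDerivAt_const ρ 1).div hden (by positivity)
  have ht1' := ht1.mul (hasDerivAt_pdr F hF h (η := η))
  have ht2 := (Real.hasDerivAt_sqrt h.ne').mul
    (hasDerivAt_pdr (pdr F) (contDiffOn_pdr F hF) h (η := η))
  exact (ht1'.add ht2).deriv

lemma key_identity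
    (heig : ∀ ρ η : ℝ, 0 < ρ →
      ρ ^ 2 * (pdr (pdr F) ρ η + pde (pde F) ρ η) = (3 / 4) * F ρ η)
    {ρ η : ℝ} (h : 0 < ρ) :
    ρ * (pdr (pdr (fpot F)) ρ η + pde (pde (fpot F)) ρ η) = pdr (fpot F) ρ η := by
  have hs : Real.sqrt ρ > 0 := Real.sqrt_pos.2 h
  have hs2 : Real.sqrt ρ ^ 2 = ρ := Real.sq_sqrt h.le
  rw [pdr_pdr_fpot F hF h, pde_pde_fpot F hF h, pdr_fpot F hF h]
  have he := heig ρ η h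
  set s := Real.sqrt ρ with hsdef
  have hρ : ρ = s ^ 2 := hs2.symm
  rw [hρ] at he ⊢
  field_simp
  field_simp at he
  linear_combination he

end fpot

/-- If F is a smooth eigenfunction of the hyperbolic Laplacian with eigenvalue 3/4,
then the pair (v₁, v₂) built from f = √ρ F satisfies the Joyce equation
componentwise. -/
theorem potential_gives_joyce_solution (F : ℝ → ℝ → ℝ)
    (hF : ContDiffOn ℝ (⊤ : ℕ∞) (fun p : ℝ × ℝ => F p.1 p.2) {p : ℝ × ℝ | 0 < p.1})
    (heig : ∀ ρ η : ℝ, 0 < ρ →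
      ρ ^ 2 * (pdr (pdr F) ρ η + pde (pde F) ρ η) = (3 / 4) * F ρ η) :
    ∀ ρ η : ℝ, 0 < ρ →
      ρ * (pdr (v11 F) ρ η + pde (v21 F) ρ η) = v11 F ρ η ∧
      ρ * (pdr (v12 F) ρ η + pde (v22 F) ρ η) = v12 F ρ η ∧
      pde (v11 F) ρ η = pdr (v21 F) ρ η ∧
      pde (v12 F) ρ η = pdr (v22 F) ρ η := by
  intro ρ η h
  have hF' : ContDiffOn ℝ (⊤ : ℕ∞) (fun p : ℝ × ℝ => F p.1 p.2) Uhp := hF.of_le (by simp)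
  have hf := contDiffOn_fpot F hF'
  have hkey := key_identity F hF' heig (η := η) h
  have hcl := clairaut (fpot F) hf (η := η) h
  have haR : HasDerivAt (fun r => pdr (fpot F) r η) (pdr (pdr (fpot F)) ρ η) ρ :=
    hasDerivAt_pdr _ (contDiffOn_pdr _ hf) h
  have haE : HasDerivAt (fun e => pdr (fpot F) ρ e) (pde (pdr (fpot F)) ρ η) η :=
    hasDerivAt_pde _ (contDiffOn_pdr _ hf) h
  have hbR : HasDerivAt (fun r => pde (fpot F) r η) (pdr (pde (fpot F)) ρ η) ρ :=
    hasDerivAt_pdr _ (contDiffOn_pde _ hf) h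
  have hbE : HasDerivAt (fun e => pde (fpot F) ρ e) (pde (pde (fpot F)) ρ η) η :=
    hasDerivAt_pde _ (contDiffOn_pde _ hf) h
  have hfR : HasDerivAt (fun r => fpot F r η) (pdr (fpot F) ρ η) ρ :=
    hasDerivAt_pdr _ hf h
  have hfE : HasDerivAt (fun e => fpot F ρ e) (pde (fpot F) ρ η) η :=
    hasDerivAt_pde _ hf h
  have h12r : pdr (v12 F) ρ η = η * pdr (pdr (fpot F)) ρ η
      - (1 * pde (fpot F) ρ η + ρ * pdr (pde (fpot F)) ρ η) :=
    ((haR.const_mul η).sub ((hasDerivAt_id ρ).mul hbR)).deriv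
  have h22e : pde (v22 F) ρ η = ρ * pde (pdr (fpot F)) ρ η
      + (1 * pde (fpot F) ρ η + η * pde (pde (fpot F)) ρ η) - pde (fpot F) ρ η :=
    (((haE.const_mul ρ).add ((hasDerivAt_id η).mul hbE)).sub hfE).deriv
  have h12e : pde (v12 F) ρ η = (1 * pdr (fpot F) ρ η + η * pde (pdr (fpot F)) ρ η)
      - ρ * pde (pde (fpot F)) ρ η :=
    (((hasDerivAt_id η).mul haE).sub (hbE.const_mul ρ)).deriv
  have h22r : pdr (v22 F) ρ η = (1 * pdr (fpot F) ρ η + ρ * pdr (pdr (fpot F)) ρ η)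
      + η * pdr (pde (fpot F)) ρ η - pdr (fpot F) ρ η :=
    ((((hasDerivAt_id ρ).mul haR).add (hbR.const_mul η)).sub hfR).deriv
  refine ⟨?_, ?_, ?_, ?_⟩
  · exact hkey
  · rw [h12r, h22e, show v12 F ρ η = η * pdr (fpot F) ρ η - ρ * pde (fpot F) ρ η from rfl]
    linear_combination η * hkey + ρ ^ 2 * hcl
  · exact hcl
  · rw [h12e, h22r]
    linear_combination η * hcl - hkey
end

section
/- Let f₀ : ℝ → ℝ be a bounded continuous function and define the smeared eigenfunction F(ρ,η) = (ρ^{3/2}/2) ∫_ℝ f₀(y)·(ρ² + (η−y)²)^{−3/2} dy on the upper half-plane H. Then for every fixed η ∈ ℝ, √ρ·F(ρ,η) → f₀(η) as ρ → 0⁺; that is, F has boundary value f₀. -/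
/-! Substituting `y = ρ t + η` turns `√ρ · F(ρ, η)` into `½ ∫ f₀(ρ t + η) (1 + t²)^{-3/2} dt`, all
powers of `ρ` cancelling. As `ρ → 0`, dominated convergence (`f₀` bounded, kernel integrable)
gives `½ f₀(η) ∫ (1 + t²)^{-3/2} dt`, and this integral is `2`, since `t (1 + t²)^{-1/2}` is an
antiderivative with limits `±1` at `±∞`. -/

open MeasureTheory Filter

noncomputable def smearedF (f₀ : ℝ → ℝ) (ρ η : ℝ) : ℝ :=
  ρ ^ ((3 : ℝ) / 2) / 2 * ∫ y : ℝ, f₀ y * (ρ ^ 2 + (η - y) ^ 2) ^ (-(3 : ℝ) / 2)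

open Topology

lemma integrable_one_add_sq_rpow_neg_three_halves :
    Integrable fun t : ℝ => (1 + t ^ 2) ^ (-(3 : ℝ) / 2) := by
  simpa [sq_abs] using integrable_rpow_neg_one_add_norm_sq (E := ℝ) (μ := volume) (r := 3)
    (by norm_num)

lemma hasDerivAt_mul_one_add_sq_rpow_neg_half (x : ℝ) :
    HasDerivAt (fun t : ℝ => t * (1 + t ^ 2) ^ (-(1 : ℝ) / 2))
      ((1 + x ^ 2) ^ (-(3 : ℝ) / 2)) x := by
  have hpos : (0 : ℝ) < 1 + x ^ 2 := by positivity
  have hsq : HasDerivAt (fun t : ℝ => 1 + t ^ 2) (2 * x) x := by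
    simpa using (hasDerivAt_pow 2 x).const_add 1
  refine ((hasDerivAt_id' x).mul
    (hsq.rpow_const (p := -(1 : ℝ) / 2) (Or.inl hpos.ne'))).congr_deriv ?_
  have hsplit : (1 + x ^ 2) ^ (-(1 : ℝ) / 2) = (1 + x ^ 2) * (1 + x ^ 2) ^ (-(3 : ℝ) / 2) := by
    rw [← Real.rpow_one_add' hpos.le (by norm_num)]
    norm_num
  rw [hsplit, show -(1 : ℝ) / 2 - 1 = -(3 : ℝ) / 2 by norm_num]
  ring

lemma tendsto_mul_one_add_sq_rpow_neg_half_atTop :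
    Tendsto (fun t : ℝ => t * (1 + t ^ 2) ^ (-(1 : ℝ) / 2)) atTop (𝓝 1) := by
  have hlim : Tendsto (fun t : ℝ => (t⁻¹ ^ 2 + 1) ^ (-(1 : ℝ) / 2)) atTop (𝓝 1) := by
    have h := ((tendsto_inv_atTop_zero.pow 2).add_const 1).rpow_const
      (p := -(1 : ℝ) / 2) (Or.inl (by norm_num))
    simpa using h
  refine hlim.congr' ?_
  filter_upwards [eventually_gt_atTop 0] with t ht
  have hrescale : t⁻¹ ^ 2 + 1 = (1 + t ^ 2) * (t ^ 2)⁻¹ := by field_simp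
  rw [hrescale, Real.mul_rpow (by positivity) (by positivity), Real.inv_rpow (by positivity),
    ← Real.rpow_natCast, ← Real.rpow_mul ht.le]
  norm_num [Real.rpow_neg_one, mul_comm]

lemma integral_one_add_sq_rpow_neg_three_halves :
    ∫ t : ℝ, (1 + t ^ 2) ^ (-(3 : ℝ) / 2) = 2 := by
  have hodd : ∀ t : ℝ,
      -t * (1 + (-t) ^ 2) ^ (-(1 : ℝ) / 2) = -(t * (1 + t ^ 2) ^ (-(1 : ℝ) / 2)) :=
    fun t => by rw [neg_sq, neg_mul]
  have hbot : Tendsto (fun t : ℝ => t * (1 + t ^ 2) ^ (-(1 : ℝ) / 2)) atBot (𝓝 (-1)) := by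
    simpa [Function.comp_def, hodd] using
      (tendsto_mul_one_add_sq_rpow_neg_half_atTop.comp tendsto_neg_atBot_atTop).neg
  rw [integral_of_hasDerivAt_of_tendsto hasDerivAt_mul_one_add_sq_rpow_neg_half
    integrable_one_add_sq_rpow_neg_three_halves hbot tendsto_mul_one_add_sq_rpow_neg_half_atTop]
  norm_num

lemma tendsto_integral_comp_mul_add_mul {f : ℝ → ℝ} {C : ℝ} (hf : Continuous f)
    (hC : ∀ y, |f y| ≤ C) (η : ℝ) {K : ℝ → ℝ} (hK : Integrable K) :
    Tendsto (fun ρ : ℝ => ∫ t, f (ρ * t + η) * K t) (𝓝 0) (𝓝 (f η * ∫ t, K t)) := by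
  rw [← integral_const_mul]
  refine tendsto_integral_filter_of_dominated_convergence (fun t => C * ‖K t‖)
    (Eventually.of_forall fun ρ => ?_) (Eventually.of_forall fun ρ => ?_)
    (hK.norm.const_mul C) (Eventually.of_forall fun t => ?_)
  · exact (hf.comp (by fun_prop)).aestronglyMeasurable.mul hK.aestronglyMeasurable
  · exact Eventually.of_forall fun t => by
      rw [norm_mul, Real.norm_eq_abs]
      exact mul_le_mul_of_nonneg_right (hC _) (norm_nonneg _)
  · have hlin : Tendsto (fun ρ : ℝ => ρ * t + η) (𝓝 0) (𝓝 η) := by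
      simpa using (by fun_prop : Continuous fun ρ : ℝ => ρ * t + η).tendsto 0
    exact ((hf.tendsto η).comp hlin).mul_const _

lemma sqrt_mul_smearedF_eq (f₀ : ℝ → ℝ) {ρ : ℝ} (hρ : 0 < ρ) (η : ℝ) :
    Real.sqrt ρ * smearedF f₀ ρ η
      = (∫ t, f₀ (ρ * t + η) * (1 + t ^ 2) ^ (-(3 : ℝ) / 2)) / 2 := by
  have hkernel : ∀ t : ℝ, (ρ ^ 2 + (η - (ρ * t + η)) ^ 2) ^ (-(3 : ℝ) / 2)
      = ρ ^ (-(3 : ℝ)) * (1 + t ^ 2) ^ (-(3 : ℝ) / 2) := fun t => by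
    rw [show ρ ^ 2 + (η - (ρ * t + η)) ^ 2 = ρ ^ 2 * (1 + t ^ 2) by ring,
      Real.mul_rpow (by positivity) (by positivity), ← Real.rpow_natCast, ← Real.rpow_mul hρ.le]
    norm_num
  have hsubst : ∫ y, f₀ y * (ρ ^ 2 + (η - y) ^ 2) ^ (-(3 : ℝ) / 2)
      = ρ ^ (-(2 : ℝ)) * ∫ t, f₀ (ρ * t + η) * (1 + t ^ 2) ^ (-(3 : ℝ) / 2) := by
    have h := Measure.integral_comp_mul_left
      (fun y => f₀ (y + η) * (ρ ^ 2 + (η - (y + η)) ^ 2) ^ (-(3 : ℝ) / 2)) ρ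
    simp only [hkernel, mul_left_comm _ (ρ ^ (-(3 : ℝ))), integral_const_mul,
      abs_of_pos (inv_pos.2 hρ), smul_eq_mul, integral_add_right_eq_self
      (fun y => f₀ y * (ρ ^ 2 + (η - y) ^ 2) ^ (-(3 : ℝ) / 2)) η] at h
    rw [← mul_inv_cancel_left₀ hρ.ne' (∫ y, _), ← h, ← mul_assoc,
      ← Real.rpow_one_add' hρ.le (by norm_num)]
    norm_num
  have hpow : ρ ^ (1 / 2 : ℝ) * ρ ^ ((3 : ℝ) / 2) * ρ ^ (-(2 : ℝ)) = 1 := by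
    rw [← Real.rpow_add hρ, ← Real.rpow_add hρ]
    norm_num
  rw [smearedF, hsubst, Real.sqrt_eq_rpow]
  linear_combination (∫ t, f₀ (ρ * t + η) * (1 + t ^ 2) ^ (-(3 : ℝ) / 2)) / 2 * hpow

/-- Poisson formula: the smeared eigenfunction F with boundary data f₀ satisfies
√ρ·F(ρ,η) → f₀(η) as ρ → 0⁺, for every fixed η. -/
theorem smeared_boundary_value (f₀ : ℝ → ℝ) (hc : Continuous f₀)
    (hb : ∃ C : ℝ, ∀ y : ℝ, |f₀ y| ≤ C) :
    ∀ η : ℝ,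
      Tendsto (fun ρ : ℝ => Real.sqrt ρ * smearedF f₀ ρ η)
        (nhdsWithin 0 (Set.Ioi 0)) (nhds (f₀ η)) := by
  intro η
  obtain ⟨C, hC⟩ := hb
  have hlim := (tendsto_integral_comp_mul_add_mul hc hC η
    integrable_one_add_sq_rpow_neg_three_halves).div_const 2
  rw [integral_one_add_sq_rpow_neg_three_halves, mul_div_cancel_right₀ _ two_ne_zero] at hlim
  refine (hlim.mono_left nhdsWithin_le_nhds).congr' ?_
  filter_upwards [self_mem_nhdsWithin] with ρ hρ
  exact (sqrt_mul_smearedF_eq f₀ hρ η).symm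
end

section
/- Let f₀ : ℝ → ℝ be a bounded continuous function, let a ∈ ℝ, ε > 0, and suppose f₀ is affine on the interval (a−ε, a+ε), i.e. there exist reals m, n with f₀(y) = m·y − n for all y ∈ (a−ε, a+ε). Define F(ρ,η) = (ρ^{3/2}/2) ∫_ℝ f₀(y)(ρ² + (η−y)²)^{−3/2} dy. Then there is a constant C > 0 such that |√ρ·F(ρ,η) − f₀(η)| ≤ C·ρ² for all η with |η − a| ≤ ε/2 and all ρ with 0 < ρ ≤ ε/2. -/
open MeasureTheory

open Filter Real Topology

/-!
With `K_ρ(t) = (ρ² + t²)^(-3/2)` one has `√ρ · F(ρ, η) = ρ²/2 · ∫ f₀(y) K_ρ(η - y) dy`.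
Since `∫ K_ρ = 2/ρ²` and `t K_ρ(t)` is odd, this smearing reproduces affine functions exactly,
so `√ρ · F(ρ, η) - f₀(η)` is the smearing of `f₀ - g`, where `g` is the affine function that
agrees with `f₀` near `a`. That difference vanishes within `ε/2` of `η` and grows at most
linearly, and for `|t| ≥ ε/2` we have `K_ρ(t) ≤ 2^(3/2) K_(ε/2)(t)`; so the integral is bounded
independently of `ρ` and `η`, leaving the factor `ρ²`.
-/

lemma integrable_add_sq_rpow_neg {c r : ℝ} (hc : 0 < c) (hr : 1 < r) :
    Integrable fun t : ℝ => (c + t ^ 2) ^ (-r / 2) := by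
  have h := (integrable_rpow_neg_one_add_norm_sq (E := ℝ) (μ := volume) (r := r)
    (by simpa using hr)).comp_div (sqrt_pos.2 hc).ne'
  refine (h.const_mul (c ^ (-r / 2))).congr (Eventually.of_forall fun t => ?_)
  simp only [norm_eq_abs, sq_abs, div_pow, sq_sqrt hc.le]
  rw [← mul_rpow hc.le (by positivity)]
  congr 1
  field_simp

lemma hasDerivAt_div_sqrt_add_sq {c : ℝ} (hc : 0 < c) (t : ℝ) :
    HasDerivAt (fun t => t / √(c + t ^ 2)) (c * (c + t ^ 2) ^ (-(3 : ℝ) / 2)) t := by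
  have hx : 0 < c + t ^ 2 := by positivity
  have hs : HasDerivAt (fun t => √(c + t ^ 2)) (2 * t / (2 * √(c + t ^ 2))) t := by
    simpa using ((hasDerivAt_pow 2 t).const_add c).sqrt hx.ne'
  refine ((hasDerivAt_id t).div hs (sqrt_pos.2 hx).ne').congr_deriv ?_
  rw [show -(3 : ℝ) / 2 = -(1 + 1 / 2) by norm_num, rpow_neg hx.le, rpow_add hx, rpow_one,
    ← sqrt_eq_rpow]
  have hsq := sq_sqrt hx.le
  field_simp
  simp only [id_eq]
  linear_combination t ^ 2 * hsq

lemma tendsto_div_sqrt_add_sq_atTop (c : ℝ) :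
    Tendsto (fun t => t / √(c + t ^ 2)) atTop (𝓝 1) := by
  have h : Tendsto (fun t : ℝ => (√(c / t ^ 2 + 1))⁻¹) atTop (𝓝 1) := by
    simpa using ((tendsto_const_nhds (x := c)).div_atTop
      (tendsto_pow_atTop two_ne_zero)).add_const 1 |>.sqrt.inv₀ (by simp)
  refine h.congr' ((eventually_gt_atTop 0).mono fun t ht => ?_)
  rw [show c / t ^ 2 + 1 = (c + t ^ 2) / t ^ 2 by field_simp, sqrt_div' _ (sq_nonneg t),
    sqrt_sq ht.le, inv_div]

lemma tendsto_div_sqrt_add_sq_atBot (c : ℝ) :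
    Tendsto (fun t => t / √(c + t ^ 2)) atBot (𝓝 (-1)) := by
  refine (((tendsto_div_sqrt_add_sq_atTop c).comp tendsto_neg_atBot_atTop).neg).congr fun t => ?_
  simp only [Function.comp_apply, neg_sq, neg_div, neg_neg]

noncomputable def smearingKernel (ρ t : ℝ) : ℝ := (ρ ^ 2 + t ^ 2) ^ (-(3 : ℝ) / 2)

lemma smearingKernel_nonneg (ρ t : ℝ) : 0 ≤ smearingKernel ρ t :=
  rpow_nonneg (by positivity) _

lemma measurable_smearingKernel (ρ : ℝ) : Measurable (smearingKernel ρ) := by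
  unfold smearingKernel
  fun_prop

lemma smearingKernel_le_of_le_abs {δ t : ℝ} (hδ : 0 < δ) (ht : δ ≤ |t|) (ρ : ℝ) :
    smearingKernel ρ t ≤ 2 ^ ((3 : ℝ) / 2) * smearingKernel δ t := by
  have hδt : δ ^ 2 ≤ t ^ 2 := by simpa using pow_le_pow_left₀ hδ.le ht 2
  calc smearingKernel ρ t ≤ ((δ ^ 2 + t ^ 2) / 2) ^ (-(3 : ℝ) / 2) :=
        rpow_le_rpow_of_nonpos (by positivity) (by nlinarith) (by norm_num)
    _ = 2 ^ ((3 : ℝ) / 2) * smearingKernel δ t := by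
        rw [div_rpow (by positivity) zero_le_two, show -(3 : ℝ) / 2 = -(3 / 2) by ring,
          rpow_neg zero_le_two, div_inv_eq_mul, mul_comm, smearingKernel, neg_div]

lemma integrable_smearingKernel {ρ : ℝ} (hρ : ρ ≠ 0) : Integrable (smearingKernel ρ) :=
  integrable_add_sq_rpow_neg (by positivity) (by norm_num : (1 : ℝ) < 3)

lemma integrable_mul_smearingKernel {ρ : ℝ} (hρ : ρ ≠ 0) :
    Integrable fun t => t * smearingKernel ρ t := by
  refine (integrable_add_sq_rpow_neg (c := ρ ^ 2) (by positivity) one_lt_two).mono'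
    (measurable_id.mul (measurable_smearingKernel ρ)).aestronglyMeasurable
    (Eventually.of_forall fun t => ?_)
  have hx : 0 < ρ ^ 2 + t ^ 2 := by positivity
  rw [norm_mul, norm_eq_abs, norm_of_nonneg (smearingKernel_nonneg ρ t)]
  calc |t| * smearingKernel ρ t
      ≤ (ρ ^ 2 + t ^ 2) ^ (1 / 2 : ℝ) * smearingKernel ρ t := by
        gcongr
        · exact smearingKernel_nonneg ρ t
        · rw [← sqrt_eq_rpow]
          exact abs_le_sqrt (by nlinarith)
    _ = (ρ ^ 2 + t ^ 2) ^ (-2 / 2 : ℝ) := by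
        rw [smearingKernel, ← rpow_add hx]
        norm_num

lemma integrable_linear_mul_smearingKernel {ρ : ℝ} (hρ : ρ ≠ 0) (A B : ℝ) :
    Integrable fun t => (A + B * |t|) * smearingKernel ρ t := by
  refine (((integrable_smearingKernel hρ).const_mul A).add
    ((integrable_mul_smearingKernel hρ).abs.const_mul B)).congr (Eventually.of_forall fun t => ?_)
  simp only [Pi.add_apply, abs_mul, abs_of_nonneg (smearingKernel_nonneg ρ t)]
  ring

lemma integral_smearingKernel {ρ : ℝ} (hρ : ρ ≠ 0) : ∫ t, smearingKernel ρ t = 2 / ρ ^ 2 := by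
  have h := integral_of_hasDerivAt_of_tendsto (f' := fun t => ρ ^ 2 * smearingKernel ρ t)
    (hasDerivAt_div_sqrt_add_sq (by positivity)) ((integrable_smearingKernel hρ).const_mul _)
    (tendsto_div_sqrt_add_sq_atBot _) (tendsto_div_sqrt_add_sq_atTop _)
  rw [integral_const_mul] at h
  field_simp
  linarith

lemma integral_mul_smearingKernel (ρ : ℝ) : ∫ t, t * smearingKernel ρ t = 0 := by
  have h := integral_neg_eq_self (fun t => t * smearingKernel ρ t) volume
  simp only [smearingKernel, neg_sq, neg_mul, integral_neg] at h ⊢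
  linarith

lemma smearedF_eq (f : ℝ → ℝ) (ρ η : ℝ) :
    smearedF f ρ η = ρ ^ ((3 : ℝ) / 2) / 2 * ∫ y, f y * smearingKernel ρ (η - y) :=
  rfl

lemma sqrt_mul_smearedF {ρ : ℝ} (hρ : 0 < ρ) (f : ℝ → ℝ) (η : ℝ) :
    √ρ * smearedF f ρ η = ρ ^ 2 / 2 * ∫ y, f y * smearingKernel ρ (η - y) := by
  rw [smearedF_eq, ← mul_assoc, ← mul_div_assoc, sqrt_eq_rpow, ← rpow_add hρ]
  norm_num

lemma integrable_mul_smearingKernel_of_abs_le {f : ℝ → ℝ} {ρ η A B : ℝ} (hρ : ρ ≠ 0)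
    (hf : AEStronglyMeasurable f) (hfb : ∀ y, |f y| ≤ A + B * |η - y|) :
    Integrable fun y => f y * smearingKernel ρ (η - y) := by
  have hK : Measurable fun y => smearingKernel ρ (η - y) :=
    (measurable_smearingKernel ρ).comp (measurable_const.sub measurable_id)
  refine ((integrable_linear_mul_smearingKernel hρ A B).comp_sub_left η).mono'
    (hf.mul hK.aestronglyMeasurable) (Eventually.of_forall fun y => ?_)
  rw [norm_mul, norm_eq_abs, norm_of_nonneg (smearingKernel_nonneg _ _)]
  exact mul_le_mul_of_nonneg_right (hfb y) (smearingKernel_nonneg _ _)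

lemma smearedF_sub {f g : ℝ → ℝ} {ρ η : ℝ}
    (hf : Integrable fun y => f y * smearingKernel ρ (η - y))
    (hg : Integrable fun y => g y * smearingKernel ρ (η - y)) :
    smearedF (fun y => f y - g y) ρ η = smearedF f ρ η - smearedF g ρ η := by
  simp only [smearedF_eq, sub_mul, integral_sub hf hg, mul_sub]

lemma sqrt_mul_smearedF_affine {ρ : ℝ} (hρ : 0 < ρ) (m n η : ℝ) :
    √ρ * smearedF (fun y => m * y - n) ρ η = m * η - n := by
  have hK := (integrable_smearingKernel hρ.ne').comp_sub_left η
  have htK := (integrable_mul_smearingKernel hρ.ne').comp_sub_left η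
  have hsplit : ∫ y, (m * y - n) * smearingKernel ρ (η - y)
      = (m * η - n) * (∫ y, smearingKernel ρ (η - y))
        - m * ∫ y, (η - y) * smearingKernel ρ (η - y) := by
    rw [← integral_const_mul, ← integral_const_mul,
      ← integral_sub (hK.const_mul _) (htK.const_mul _)]
    congr 1
    ext y
    ring
  have hK₁ : ∫ y, smearingKernel ρ (η - y) = 2 / ρ ^ 2 := by
    rw [integral_sub_left_eq_self (smearingKernel ρ) volume η, integral_smearingKernel hρ.ne']
  have htK₀ : ∫ y, (η - y) * smearingKernel ρ (η - y) = 0 := by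
    rw [integral_sub_left_eq_self (fun t => t * smearingKernel ρ t) volume η,
      integral_mul_smearingKernel]
  rw [sqrt_mul_smearedF hρ, hsplit, hK₁, htK₀]
  field_simp
  ring

lemma abs_sqrt_mul_smearedF_le {f : ℝ → ℝ} {ρ η δ A B : ℝ} (hρ : 0 < ρ) (hδ : 0 < δ)
    (hfb : ∀ y, |f y| ≤ A + B * |η - y|)
    (hf0 : ∀ y, |η - y| < δ → f y = 0) :
    |√ρ * smearedF f ρ η|
      ≤ ρ ^ 2 / 2 * (2 ^ ((3 : ℝ) / 2) * ∫ t, (A + B * |t|) * smearingKernel δ t) := by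
  rw [sqrt_mul_smearedF hρ, abs_mul, abs_of_nonneg (by positivity),
    ← integral_sub_left_eq_self (fun t => (A + B * |t|) * smearingKernel δ t) volume η,
    ← integral_const_mul]
  gcongr
  rw [← norm_eq_abs]
  refine norm_integral_le_of_norm_le
    (((integrable_linear_mul_smearingKernel hδ.ne' A B).comp_sub_left η).const_mul _)
    (Eventually.of_forall fun y => ?_)
  rw [norm_mul, norm_eq_abs, norm_of_nonneg (smearingKernel_nonneg _ _)]
  by_cases hy : |η - y| < δ
  · rw [hf0 y hy, abs_zero, zero_mul]
    have := (abs_nonneg (f y)).trans (hfb y)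
    have := smearingKernel_nonneg δ (η - y)
    positivity
  · calc |f y| * smearingKernel ρ (η - y)
        ≤ (A + B * |η - y|) * (2 ^ ((3 : ℝ) / 2) * smearingKernel δ (η - y)) :=
          mul_le_mul (hfb y) (smearingKernel_le_of_le_abs hδ (not_lt.1 hy) ρ)
            (smearingKernel_nonneg _ _) ((abs_nonneg _).trans (hfb y))
      _ = _ := by ring

/-- If the boundary data f₀ is affine near a point a, then near a the smeared
eigenfunction satisfies √ρ·F(ρ,η) = f₀(η) + O(ρ²). -/
theorem smeared_boundary_value_affine (f₀ : ℝ → ℝ) (hc : Continuous f₀)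
    (hb : ∃ C : ℝ, ∀ y : ℝ, |f₀ y| ≤ C)
    (a ε : ℝ) (hε : 0 < ε)
    (haff : ∃ m n : ℝ, ∀ y ∈ Set.Ioo (a - ε) (a + ε), f₀ y = m * y - n) :
    ∃ C : ℝ, 0 < C ∧ ∀ η ρ : ℝ, |η - a| ≤ ε / 2 → 0 < ρ → ρ ≤ ε / 2 →
      |Real.sqrt ρ * smearedF f₀ ρ η - f₀ η| ≤ C * ρ ^ 2 := by
  obtain ⟨C₀, hC₀⟩ := hb
  obtain ⟨m, n, hmn⟩ := haff
  set M := 2 ^ ((3 : ℝ) / 2) * ∫ t, (2 * C₀ + |m| * |t|) * smearingKernel (ε / 2) t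
  have hM : 0 ≤ M := by
    have := (abs_nonneg _).trans (hC₀ 0)
    exact mul_nonneg (by positivity)
      (integral_nonneg fun t => mul_nonneg (by positivity) (smearingKernel_nonneg _ _))
  refine ⟨M / 2 + 1, by positivity, fun η ρ hη hρ _ => ?_⟩
  have hη' := abs_le.1 hη
  have hmn_near : ∀ y, |η - y| < ε / 2 → f₀ y = m * y - n := fun y hy =>
    hmn y ⟨by linarith [(abs_lt.1 hy).2], by linarith [(abs_lt.1 hy).1]⟩
  have hfη : f₀ η = m * η - n := hmn_near η (by simpa using half_pos hε)
  have haffine_growth : ∀ y, |m * y - n| ≤ |f₀ η| + |m| * |η - y| := fun y => by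
    calc |m * y - n| = |(m * η - n) - m * (η - y)| := by ring_nf
      _ ≤ |m * η - n| + |m * (η - y)| := abs_sub _ _
      _ = |f₀ η| + |m| * |η - y| := by rw [abs_mul, hfη]
  have hgrowth : ∀ y, |f₀ y - (m * y - n)| ≤ 2 * C₀ + |m| * |η - y| := fun y =>
    (abs_sub _ _).trans (by linarith [hC₀ y, hC₀ η, haffine_growth y])
  have hf₀K := integrable_mul_smearingKernel_of_abs_le (η := η) (A := C₀) (B := 0) hρ.ne'
    hc.aestronglyMeasurable (by simpa using hC₀)
  have hgK := integrable_mul_smearingKernel_of_abs_le hρ.ne' (by fun_prop) haffine_growth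
  calc |√ρ * smearedF f₀ ρ η - f₀ η|
      = |√ρ * smearedF (fun y => f₀ y - (m * y - n)) ρ η| := by
        rw [smearedF_sub hf₀K hgK, mul_sub, sqrt_mul_smearedF_affine hρ, hfη]
    _ ≤ ρ ^ 2 / 2 * M :=
        abs_sqrt_mul_smearedF_le hρ (half_pos hε) hgrowth
          fun y hy => sub_eq_zero.2 (hmn_near y hy)
    _ ≤ (M / 2 + 1) * ρ ^ 2 := by nlinarith [sq_nonneg ρ]
end

section
/- Let f₀ : ℝ → ℝ be twice continuously differentiable with f₀'' compactly supported, and suppose there exist R > 0 and reals μ, ν such that f₀(y) = μ·y − ν for all y ≥ R and f₀(y) = −μ·y + ν for all y ≤ −R (i.e. f₀ is affine near infinity with coefficients odd at infinity). Then for every ρ > 0 and η ∈ ℝ the integration-by-parts identity ∫_ℝ √(ρ² + (η−y)²) · f₀''(y) dy = ρ² ∫_ℝ f₀(y) · (ρ² + (η−y)²)^{−3/2} dy holds, both integrals being finite. -/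
/-!
Write `g y = √(ρ² + (η - y)²)`, so that `g' = (y - η) / g` and `g'' = ρ² g⁻³`. The Wronskian
`W = g f₀' - g' f₀` has `W' = g f₀'' - g'' f₀`, so the identity says `∫ W' = 0`, i.e. that `W`
has the same limit at `-∞` and at `+∞`. Where `f₀ y = a y + b` one computes
`W y = (a ρ² - (a η + b) (y - η)) / g y`, which tends to `∓(a η + b)` at `±∞`; with
`(a, b) = (μ, -ν)` on the right and `(-μ, ν)` on the left both limits equal `ν - μ η`, which is
exactly where the odd coefficients at infinity enter. Integrability of `f₀ g⁻³` comes from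
`f₀ = O(g)` at `±∞` and the integrability of `g⁻²`, and `f₀''` vanishes outside `[-R, R]`.
-/
open MeasureTheory Filter Set Topology Asymptotics

theorem integral_mul_deriv_deriv_eq_deriv_deriv_mul {A : Type*} [NormedRing A] [NormedAlgebra ℝ A]
    [CompleteSpace A] {u u' u'' v v' v'' : ℝ → A} {L : A}
    (hu : ∀ x, HasDerivAt u (u' x) x) (hu' : ∀ x, HasDerivAt u' (u'' x) x)
    (hv : ∀ x, HasDerivAt v (v' x) x) (hv' : ∀ x, HasDerivAt v' (v'' x) x)
    (huv'' : Integrable fun x => u x * v'' x) (hu''v : Integrable fun x => u'' x * v x)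
    (hbot : Tendsto (fun x => u x * v' x - u' x * v x) atBot (𝓝 L))
    (htop : Tendsto (fun x => u x * v' x - u' x * v x) atTop (𝓝 L)) :
    ∫ x, u x * v'' x = ∫ x, u'' x * v x := by
  have hW (x : ℝ) : HasDerivAt (fun x => u x * v' x - u' x * v x) (u x * v'' x - u'' x * v x) x :=
    (((hu x).mul (hv' x)).sub ((hu' x).mul (hv x))).congr_deriv (by abel)
  have h := integral_of_hasDerivAt_of_tendsto hW (huv''.sub hu''v) hbot htop
  rwa [integral_sub huv'' hu''v, sub_self, sub_eq_zero] at h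

section Affine

variable {f : ℝ → ℝ} {a b x : ℝ}

theorem deriv_eq_of_eventuallyEq_affine (h : f =ᶠ[𝓝 x] fun z => a * z + b) : deriv f x = a := by
  rw [h.deriv_eq]
  simp

theorem deriv_deriv_eq_zero_of_eventuallyEq_affine (h : f =ᶠ[𝓝 x] fun z => a * z + b) :
    deriv (deriv f) x = 0 := by
  have h' : deriv f =ᶠ[𝓝 x] fun _ => a :=
    h.eventuallyEq_nhds.mono fun _ => deriv_eq_of_eventuallyEq_affine
  rw [h'.deriv_eq, deriv_const]

theorem eventually_eventuallyEq_nhds_atTop_of_affine {R : ℝ}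
    (h : ∀ y, R ≤ y → f y = a * y + b) : ∀ᶠ y in atTop, f =ᶠ[𝓝 y] fun z => a * z + b :=
  (eventually_gt_atTop R).mono fun _ hy =>
    eventually_of_mem (Ioi_mem_nhds hy) fun z hz => h z (le_of_lt hz)

theorem eventually_eventuallyEq_nhds_atBot_of_affine {R : ℝ}
    (h : ∀ y, y ≤ R → f y = a * y + b) : ∀ᶠ y in atBot, f =ᶠ[𝓝 y] fun z => a * z + b :=
  (eventually_lt_atBot R).mono fun _ hy =>
    eventually_of_mem (Iio_mem_nhds hy) fun z hz => h z (le_of_lt hz)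

theorem hasCompactSupport_deriv_deriv_of_affine {R₁ R₂ a₁ b₁ a₂ b₂ : ℝ}
    (hbot : ∀ y, y ≤ R₁ → f y = a₁ * y + b₁) (htop : ∀ y, R₂ ≤ y → f y = a₂ * y + b₂) :
    HasCompactSupport (deriv (deriv f)) := by
  refine HasCompactSupport.intro (isCompact_Icc (a := R₁) (b := R₂)) fun y hy => ?_
  rw [mem_Icc, not_and_or, not_le, not_le] at hy
  rcases hy with hy | hy
  · exact deriv_deriv_eq_zero_of_eventuallyEq_affine
      (eventually_of_mem (Iio_mem_nhds hy) fun z hz => hbot z (le_of_lt hz))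
  · exact deriv_deriv_eq_zero_of_eventuallyEq_affine
      (eventually_of_mem (Ioi_mem_nhds hy) fun z hz => htop z (le_of_lt hz))

end Affine

section Kernel

variable {ρ : ℝ} (η : ℝ)

theorem hasDerivAt_sqrt_sq_add_sq (hρ : ρ ≠ 0) (y : ℝ) :
    HasDerivAt (fun y => √(ρ ^ 2 + (η - y) ^ 2)) ((y - η) / √(ρ ^ 2 + (η - y) ^ 2)) y := by
  have hq : 0 < ρ ^ 2 + (η - y) ^ 2 := by positivity
  have hq' : HasDerivAt (fun y => ρ ^ 2 + (η - y) ^ 2) (2 * (y - η)) y :=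
    ((((hasDerivAt_id y).const_sub η).pow 2).const_add (ρ ^ 2)).congr_deriv (by simp; ring)
  exact (hq'.sqrt hq.ne').congr_deriv (by field_simp)

theorem hasDerivAt_sub_div_sqrt_sq_add_sq (hρ : ρ ≠ 0) (y : ℝ) :
    HasDerivAt (fun y => (y - η) / √(ρ ^ 2 + (η - y) ^ 2))
      (ρ ^ 2 * (ρ ^ 2 + (η - y) ^ 2) ^ (-(3 : ℝ) / 2)) y := by
  have hq : 0 < ρ ^ 2 + (η - y) ^ 2 := by positivity
  have hs : 0 < √(ρ ^ 2 + (η - y) ^ 2) := Real.sqrt_pos.mpr hq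
  have h := ((hasDerivAt_id y).sub_const η).div (hasDerivAt_sqrt_sq_add_sq η hρ y) hs.ne'
  refine h.congr_deriv ?_
  rw [show (-(3 : ℝ) / 2) = -1 + -(1 / 2) by norm_num, Real.rpow_add hq, Real.rpow_neg_one,
    Real.rpow_neg hq.le, ← Real.sqrt_eq_rpow]
  have hsq := Real.sq_sqrt hq.le
  field_simp
  simp
  rw [hsq]
  ring

theorem tendsto_affine_div_sqrt_atTop (a b : ℝ) :
    Tendsto (fun y => (a * y + b) / √(ρ ^ 2 + (η - y) ^ 2)) atTop (𝓝 a) := by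
  have hinv (c : ℝ) : Tendsto (fun y : ℝ => c / y) atTop (𝓝 0) :=
    tendsto_const_nhds.div_atTop tendsto_id
  have hlim : Tendsto (fun y => (a + b / y) / √((ρ / y) ^ 2 + (η / y - 1) ^ 2)) atTop
      (𝓝 ((a + 0) / √(0 ^ 2 + (0 - 1) ^ 2))) :=
    (tendsto_const_nhds.add (hinv b)).div
      (((hinv ρ).pow 2).add (((hinv η).sub tendsto_const_nhds).pow 2)).sqrt (by norm_num)
  norm_num at hlim
  refine hlim.congr' ?_
  filter_upwards [eventually_gt_atTop 0] with y hy
  have hscale : √((ρ / y) ^ 2 + (η / y - 1) ^ 2) = √(ρ ^ 2 + (η - y) ^ 2) / y := by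
    rw [show (ρ / y) ^ 2 + (η / y - 1) ^ 2 = (ρ ^ 2 + (η - y) ^ 2) / y ^ 2 by field_simp,
      Real.sqrt_div' _ (sq_nonneg y), Real.sqrt_sq hy.le]
  rw [hscale, div_div_eq_mul_div]
  field_simp

theorem tendsto_affine_div_sqrt_atBot (a b : ℝ) :
    Tendsto (fun y => (a * y + b) / √(ρ ^ 2 + (η - y) ^ 2)) atBot (𝓝 (-a)) := by
  refine ((tendsto_affine_div_sqrt_atTop (ρ := ρ) (-η) (-a) b).comp tendsto_neg_atBot_atTop).congr
    fun y => ?_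
  simp only [Function.comp_apply]
  ring_nf

theorem integrable_inv_sq_add_sq (hρ : ρ ≠ 0) : Integrable fun y => (ρ ^ 2 + (η - y) ^ 2)⁻¹ := by
  refine (((integrable_inv_one_add_sq.comp_div hρ).comp_sub_left η).const_mul (ρ ^ 2)⁻¹).congr
    (Eventually.of_forall fun y => ?_)
  field_simp

theorem integrable_mul_rpow_neg_three_halves (hρ : ρ ≠ 0) {f : ℝ → ℝ} (hf : Continuous f)
    (hbot : f =O[atBot] fun y => √(ρ ^ 2 + (η - y) ^ 2))
    (htop : f =O[atTop] fun y => √(ρ ^ 2 + (η - y) ^ 2)) :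
    Integrable fun y => f y * (ρ ^ 2 + (η - y) ^ 2) ^ (-(3 : ℝ) / 2) := by
  have hq (y : ℝ) : 0 < ρ ^ 2 + (η - y) ^ 2 := by positivity
  have hkernel (y : ℝ) : √(ρ ^ 2 + (η - y) ^ 2) * (ρ ^ 2 + (η - y) ^ 2) ^ (-(3 : ℝ) / 2) =
      (ρ ^ 2 + (η - y) ^ 2)⁻¹ := by
    rw [Real.sqrt_eq_rpow, ← Real.rpow_add (hq y), ← Real.rpow_neg_one]
    norm_num
  have hdecay {l : Filter ℝ} (h : f =O[l] fun y => √(ρ ^ 2 + (η - y) ^ 2)) :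
      (fun y => f y * (ρ ^ 2 + (η - y) ^ 2) ^ (-(3 : ℝ) / 2)) =O[l]
        fun y => (ρ ^ 2 + (η - y) ^ 2)⁻¹ :=
    (h.mul (isBigO_refl _ l)).congr_right hkernel
  have hcont : Continuous fun y => f y * (ρ ^ 2 + (η - y) ^ 2) ^ (-(3 : ℝ) / 2) :=
    hf.mul ((by fun_prop : Continuous fun y => ρ ^ 2 + (η - y) ^ 2).rpow_const
      fun y => Or.inl (hq y).ne')
  exact (hcont.locallyIntegrable (μ := volume)).integrable_of_isBigO_atBot_atTop
    (hdecay hbot) ((integrable_inv_sq_add_sq η hρ).integrableAtFilter _)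
    (hdecay htop) ((integrable_inv_sq_add_sq η hρ).integrableAtFilter _)

section AffineTails

variable {f : ℝ → ℝ} {a b : ℝ}

theorem isBigO_sqrt_atTop_of_affine (hρ : ρ ≠ 0) (h : ∀ᶠ y in atTop, f y = a * y + b) :
    f =O[atTop] fun y => √(ρ ^ 2 + (η - y) ^ 2) :=
  isBigO_of_div_tendsto_nhds (Eventually.of_forall fun y hy => absurd hy (by positivity)) a
    ((tendsto_affine_div_sqrt_atTop (ρ := ρ) η a b).congr' (h.mono fun y hy => by simp [hy]))

theorem isBigO_sqrt_atBot_of_affine (hρ : ρ ≠ 0) (h : ∀ᶠ y in atBot, f y = a * y + b) :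
    f =O[atBot] fun y => √(ρ ^ 2 + (η - y) ^ 2) :=
  isBigO_of_div_tendsto_nhds (Eventually.of_forall fun y hy => absurd hy (by positivity)) (-a)
    ((tendsto_affine_div_sqrt_atBot (ρ := ρ) η a b).congr' (h.mono fun y hy => by simp [hy]))

theorem sqrt_mul_sub_div_sqrt_mul_affine (hρ : ρ ≠ 0) (y : ℝ) :
    √(ρ ^ 2 + (η - y) ^ 2) * a - (y - η) / √(ρ ^ 2 + (η - y) ^ 2) * (a * y + b) =
      (-(a * η + b) * y + (a * ρ ^ 2 + (a * η + b) * η)) / √(ρ ^ 2 + (η - y) ^ 2) := by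
  have hq : 0 < ρ ^ 2 + (η - y) ^ 2 := by positivity
  have hs : √(ρ ^ 2 + (η - y) ^ 2) ≠ 0 := (Real.sqrt_pos.mpr hq).ne'
  field_simp
  rw [Real.sq_sqrt hq.le]
  ring

theorem tendsto_wronskian_atTop (hρ : ρ ≠ 0) (h : ∀ᶠ y in atTop, f =ᶠ[𝓝 y] fun z => a * z + b) :
    Tendsto (fun y => √(ρ ^ 2 + (η - y) ^ 2) * deriv f y
      - (y - η) / √(ρ ^ 2 + (η - y) ^ 2) * f y) atTop (𝓝 (-(a * η + b))) := by
  refine (tendsto_affine_div_sqrt_atTop (ρ := ρ) η _ (a * ρ ^ 2 + (a * η + b) * η)).congr'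
    (h.mono fun y hy => ?_)
  dsimp only
  rw [deriv_eq_of_eventuallyEq_affine hy, hy.eq_of_nhds, sqrt_mul_sub_div_sqrt_mul_affine η hρ]

theorem tendsto_wronskian_atBot (hρ : ρ ≠ 0) (h : ∀ᶠ y in atBot, f =ᶠ[𝓝 y] fun z => a * z + b) :
    Tendsto (fun y => √(ρ ^ 2 + (η - y) ^ 2) * deriv f y
      - (y - η) / √(ρ ^ 2 + (η - y) ^ 2) * f y) atBot (𝓝 (a * η + b)) := by
  rw [← neg_neg (a * η + b)]
  refine (tendsto_affine_div_sqrt_atBot (ρ := ρ) η _ (a * ρ ^ 2 + (a * η + b) * η)).congr'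
    (h.mono fun y hy => ?_)
  dsimp only
  rw [deriv_eq_of_eventuallyEq_affine hy, hy.eq_of_nhds, sqrt_mul_sub_div_sqrt_mul_affine η hρ]

end AffineTails

end Kernel

theorem integration_by_parts_poisson_general (f₀ : ℝ → ℝ) (hf : ContDiff ℝ 2 f₀)
    (haff : ∃ R : ℝ, 0 < R ∧ ∃ μ ν : ℝ,
      (∀ y : ℝ, R ≤ y → f₀ y = μ * y - ν) ∧
      (∀ y : ℝ, y ≤ -R → f₀ y = -(μ * y) + ν)) :
    ∀ ρ η : ℝ, 0 < ρ →
      Integrable (fun y : ℝ => Real.sqrt (ρ ^ 2 + (η - y) ^ 2) * deriv (deriv f₀) y) ∧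
      Integrable (fun y : ℝ => f₀ y * (ρ ^ 2 + (η - y) ^ 2) ^ (-(3 : ℝ) / 2)) ∧
      (∫ y : ℝ, Real.sqrt (ρ ^ 2 + (η - y) ^ 2) * deriv (deriv f₀) y)
        = ρ ^ 2 * ∫ y : ℝ, f₀ y * (ρ ^ 2 + (η - y) ^ 2) ^ (-(3 : ℝ) / 2) := by
  obtain ⟨R, -, μ, ν, hright, hleft⟩ := haff
  intro ρ η hρ
  have hright' (y : ℝ) (hy : R ≤ y) : f₀ y = μ * y + -ν := by rw [hright y hy, sub_eq_add_neg]
  have hleft' (y : ℝ) (hy : y ≤ -R) : f₀ y = -μ * y + ν := by rw [hleft y hy, neg_mul]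
  have hf' : ContDiff ℝ 1 (deriv f₀) := hf.deriv'
  have hI₁ : Integrable fun y => √(ρ ^ 2 + (η - y) ^ 2) * deriv (deriv f₀) y :=
    ((by fun_prop : Continuous fun y => √(ρ ^ 2 + (η - y) ^ 2)).mul
      (hf'.continuous_deriv le_rfl)).integrable_of_hasCompactSupport
      (hasCompactSupport_deriv_deriv_of_affine hleft' hright').mul_left
  have hI₂ : Integrable fun y => f₀ y * (ρ ^ 2 + (η - y) ^ 2) ^ (-(3 : ℝ) / 2) :=
    integrable_mul_rpow_neg_three_halves η hρ.ne' hf.continuous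
      (isBigO_sqrt_atBot_of_affine η hρ.ne' ((eventually_le_atBot (-R)).mono hleft'))
      (isBigO_sqrt_atTop_of_affine η hρ.ne' ((eventually_ge_atTop R).mono hright'))
  refine ⟨hI₁, hI₂, ?_⟩
  have hWtop := tendsto_wronskian_atTop η hρ.ne'
    (eventually_eventuallyEq_nhds_atTop_of_affine hright')
  rw [show -(μ * η + -ν) = -μ * η + ν by ring] at hWtop
  calc ∫ y, √(ρ ^ 2 + (η - y) ^ 2) * deriv (deriv f₀) y
      = ∫ y, ρ ^ 2 * (ρ ^ 2 + (η - y) ^ 2) ^ (-(3 : ℝ) / 2) * f₀ y :=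
        integral_mul_deriv_deriv_eq_deriv_deriv_mul (hasDerivAt_sqrt_sq_add_sq η hρ.ne')
          (hasDerivAt_sub_div_sqrt_sq_add_sq η hρ.ne')
          (fun y => (hf.differentiable two_ne_zero y).hasDerivAt)
          (fun y => (hf'.differentiable one_ne_zero y).hasDerivAt) hI₁
          ((hI₂.const_mul (ρ ^ 2)).congr (Eventually.of_forall fun y => by ring))
          (tendsto_wronskian_atBot η hρ.ne'
            (eventually_eventuallyEq_nhds_atBot_of_affine hleft')) hWtop
    _ = ρ ^ 2 * ∫ y, f₀ y * (ρ ^ 2 + (η - y) ^ 2) ^ (-(3 : ℝ) / 2) := by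
        rw [← integral_const_mul]
        congr 1 with y
        ring

/-- Integration by parts identity converting the superposition of basic
eigenfunctions against f₀'' into the Poisson formula with boundary data f₀,
for f₀ affine near infinity with coefficients odd at infinity. -/
theorem integration_by_parts_poisson (f₀ : ℝ → ℝ) (hf : ContDiff ℝ 2 f₀)
    (hsupp : HasCompactSupport (deriv (deriv f₀)))
    (haff : ∃ R : ℝ, 0 < R ∧ ∃ μ ν : ℝ,
      (∀ y : ℝ, R ≤ y → f₀ y = μ * y - ν) ∧
      (∀ y : ℝ, y ≤ -R → f₀ y = -(μ * y) + ν)) :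
    ∀ ρ η : ℝ, 0 < ρ →
      Integrable (fun y : ℝ => Real.sqrt (ρ ^ 2 + (η - y) ^ 2) * deriv (deriv f₀) y) ∧
      Integrable (fun y : ℝ => f₀ y * (ρ ^ 2 + (η - y) ^ 2) ^ (-(3 : ℝ) / 2)) ∧
      (∫ y : ℝ, Real.sqrt (ρ ^ 2 + (η - y) ^ 2) * deriv (deriv f₀) y)
        = ρ ^ 2 * ∫ y : ℝ, f₀ y * (ρ ^ 2 + (η - y) ^ 2) ^ (-(3 : ℝ) / 2) :=
  integration_by_parts_poisson_general f₀ hf haff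
end

section
/- Let μ, ν : ℝ → ℝ be continuous functions with compact support such that μ(y)ν(z) − μ(z)ν(y) ≤ 0 whenever y ≤ z, and such that there exist y₀ < z₀ with μ(y₀)ν(z₀) − μ(z₀)ν(y₀) < 0. Then for every ρ > 0 and every η ∈ ℝ, the double integral ∬_{ℝ×ℝ} (y−z)·(μ(y)ν(z) − μ(z)ν(y)) · (ρ² + (η−y)²)^{−3/2} (ρ² + (η−z)²)^{−3/2} dy dz is strictly positive. (Consequently the determinant of the associated Joyce matrix, which equals −ρ³/8 times this integral, is strictly negative throughout the hyperbolic plane.) -/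
open MeasureTheory

/-- If μ(y)ν(z) − μ(z)ν(y) ≤ 0 whenever y ≤ z, with strict inequality somewhere,
then the double integral giving (−8/ρ³ times) the determinant of the associated
Joyce matrix is strictly positive; hence det Φ < 0 throughout the hyperbolic
plane. -/
theorem det_negative (μ ν : ℝ → ℝ) (hμc : Continuous μ) (hνc : Continuous ν)
    (hμs : HasCompactSupport μ) (hνs : HasCompactSupport ν)
    (hmono : ∀ y z : ℝ, y ≤ z → μ y * ν z - μ z * ν y ≤ 0)
    (hstrict : ∃ y z : ℝ, y < z ∧ μ y * ν z - μ z * ν y < 0) :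
    ∀ ρ η : ℝ, 0 < ρ →
      0 < ∫ p : ℝ × ℝ,
        (p.1 - p.2) * (μ p.1 * ν p.2 - μ p.2 * ν p.1)
          * (ρ ^ 2 + (η - p.1) ^ 2) ^ (-(3 : ℝ) / 2)
          * (ρ ^ 2 + (η - p.2) ^ 2) ^ (-(3 : ℝ) / 2) := by
  intro ρ η hρ
  set F : ℝ × ℝ → ℝ := fun p =>
        (p.1 - p.2) * (μ p.1 * ν p.2 - μ p.2 * ν p.1)
          * (ρ ^ 2 + (η - p.1) ^ 2) ^ (-(3 : ℝ) / 2)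
          * (ρ ^ 2 + (η - p.2) ^ 2) ^ (-(3 : ℝ) / 2) with hF
  have hbase : ∀ t : ℝ, 0 < ρ ^ 2 + (η - t) ^ 2 := fun t => by positivity
  have hw : ∀ t : ℝ, 0 < (ρ ^ 2 + (η - t) ^ 2) ^ (-(3 : ℝ) / 2) := fun t =>
    Real.rpow_pos_of_pos (hbase t) _
  -- continuity
  have hcont : Continuous F := by
    apply Continuous.mul
    apply Continuous.mul
    · exact (continuous_fst.sub continuous_snd).mul
        (((hμc.comp continuous_fst).mul (hνc.comp continuous_snd)).sub
          ((hμc.comp continuous_snd).mul (hνc.comp continuous_fst)))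
    · exact (continuous_const.add ((continuous_const.sub continuous_fst).pow 2)).rpow_const
        (fun p => Or.inl (ne_of_gt (hbase p.1)))
    · exact (continuous_const.add ((continuous_const.sub continuous_snd).pow 2)).rpow_const
        (fun p => Or.inl (ne_of_gt (hbase p.2)))
  -- nonnegativity
  have hnonneg : ∀ p : ℝ × ℝ, 0 ≤ F p := by
    intro p
    have key : 0 ≤ (p.1 - p.2) * (μ p.1 * ν p.2 - μ p.2 * ν p.1) := by
      rcases le_total p.1 p.2 with h | h
      · nlinarith [hmono p.1 p.2 h]
      · nlinarith [hmono p.2 p.1 h]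
    have := hw p.1
    have := hw p.2
    simp only [hF]
    positivity
  -- compact support
  have hsupp : HasCompactSupport F := by
    apply HasCompactSupport.intro
      ((hμs.union hνs).prod (hμs.union hνs))
    intro p hp
    have hker : μ p.1 * ν p.2 - μ p.2 * ν p.1 = 0 := by
      rw [Set.mem_prod, not_and_or] at hp
      rcases hp with h | h
      · have h1 : μ p.1 = 0 := by
          by_contra hc
          exact h (Set.mem_union_left _ (subset_tsupport μ hc))
        have h2 : ν p.1 = 0 := by
          by_contra hc
          exact h (Set.mem_union_right _ (subset_tsupport ν hc))
        simp [h1, h2]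
      · have h1 : μ p.2 = 0 := by
          by_contra hc
          exact h (Set.mem_union_left _ (subset_tsupport μ hc))
        have h2 : ν p.2 = 0 := by
          by_contra hc
          exact h (Set.mem_union_right _ (subset_tsupport ν hc))
        simp [h1, h2]
    simp [hF, hker]
  have hint : Integrable F := hcont.integrable_of_hasCompactSupport hsupp
  -- support has positive measure
  obtain ⟨y₀, z₀, hy, hv⟩ := hstrict
  have hFp : 0 < F (y₀, z₀) := by
    have h1 := hw y₀
    have h2 := hw z₀
    have : 0 < (y₀ - z₀) * (μ y₀ * ν z₀ - μ z₀ * ν y₀) :=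
      mul_pos_of_neg_of_neg (by linarith) hv
    simp only [hF]
    positivity
  have hopen : IsOpen (Function.support F) := by
    have : Function.support F = F ⁻¹' {(0:ℝ)}ᶜ := by
      ext x; simp [Function.support]
    rw [this]
    exact isClosed_singleton.isOpen_compl.preimage hcont
  have hpos : 0 < (volume : Measure (ℝ × ℝ)) (Function.support F) :=
    hopen.measure_pos volume ⟨(y₀, z₀), ne_of_gt hFp⟩
  exact (integral_pos_iff_support_of_nonneg_ae (Filter.Eventually.of_forall hnonneg) hint).mpr hpos
end
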